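/- arXiv:1303.2812 — 4 statements merged into one kernel-verified Lean document; each statement's English description precedes it below -/
import Mathlib

section
/- For the SINR function γ_k(p) = V·α_k·p_k / (σ² + Σ_{ℓ≠k} α_ℓ p_ℓ), if each player k is at SINR at least γ* > 0, i.e., γ_k(p) ≥ γ* for all k ∈ {1,...,K}, and all α_k > 0, σ² > 0, p_k > 0, then γ*·(K−1) < V. -/
open Finset

/-- if every player's SINR is at least `γ* > 0`, then
`γ*·(K−1) < V`. -/
theorem stmt1 (K : ℕ) (hK : 0 < K) (V σ2 γstar : ℝ)
    (hV : 0 < V) (hσ : 0 < σ2) (hγ : 0 < γstar)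
    (α p : Fin K → ℝ) (hα : ∀ k, 0 < α k) (hp : ∀ k, 0 < p k)
    (hsinr : ∀ k : Fin K,
      γstar ≤ V * α k * p k / (σ2 + ∑ ℓ ∈ univ.erase k, α ℓ * p ℓ)) :
    γstar * ((K : ℝ) - 1) < V := by
  have hFin : Nonempty (Fin K) := ⟨⟨0, hK⟩⟩
  set q : Fin K → ℝ := fun k => α k * p k with hqdef
  have hq : ∀ k, 0 < q k := fun k => mul_pos (hα k) (hp k)
  set S : ℝ := ∑ k, q k with hSdef
  have hS : 0 < S := Finset.sum_pos (fun k _ => hq k) univ_nonempty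
  have key : ∀ k, γstar * (σ2 + (S - q k)) ≤ V * q k := by
    intro k
    have herase : ∑ ℓ ∈ univ.erase k, q ℓ = S - q k :=
      Finset.sum_erase_eq_sub (mem_univ k)
    have hnn : 0 ≤ ∑ ℓ ∈ univ.erase k, q ℓ :=
      Finset.sum_nonneg (fun ℓ _ => (hq ℓ).le)
    have hden : 0 < σ2 + ∑ ℓ ∈ univ.erase k, q ℓ := by linarith
    have h := hsinr k
    rw [le_div_iff₀ hden] at h
    rw [herase] at h
    calc γstar * (σ2 + (S - q k)) ≤ V * α k * p k := h
      _ = V * q k := by ring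
  have hsum : ∑ k, γstar * (σ2 + (S - q k)) ≤ ∑ k, V * q k :=
    Finset.sum_le_sum (fun k _ => key k)
  have h1 : ∑ k, γstar * (σ2 + (S - q k)) = γstar * ((K : ℝ) * σ2 + (K : ℝ) * S - S) := by
    rw [← Finset.mul_sum]
    congr 1
    simp [Finset.sum_add_distrib, Finset.sum_sub_distrib, Finset.card_univ, mul_comm]
    ring
  have h2 : ∑ k, V * q k = V * S := by rw [← Finset.mul_sum]
  rw [h1, h2] at hsum
  have hK1 : (1 : ℝ) ≤ (K : ℝ) := by exact_mod_cast hK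
  have : γstar * ((K : ℝ) - 1) * S < V * S := by nlinarith [mul_pos hγ hσ, mul_le_mul_of_nonneg_right hK1 (mul_pos hγ hσ).le]
  exact lt_of_mul_lt_mul_right this hS.le
end

section
/- In a finite two-player game where each player's strategy set is a finite linearly ordered set and each payoff has increasing differences in (own strategy, opponent strategy), a pure-strategy Nash equilibrium exists. -/
/-- a finite two-player game with linearly ordered strategy sets
and payoffs with increasing differences admits a pure-strategy Nash
equilibrium. -/
theorem stmt7 (S1 S2 : Finset ℝ) (h1 : S1.Nonempty) (h2 : S2.Nonempty)
    (u1 u2 : ℝ → ℝ → ℝ)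
    (hid1 : ∀ s s' t t' : ℝ, s ≤ s' → t ≤ t' →
      u1 s' t - u1 s t ≤ u1 s' t' - u1 s t')
    (hid2 : ∀ s s' t t' : ℝ, t ≤ t' → s ≤ s' →
      u2 s t' - u2 s t ≤ u2 s' t' - u2 s' t) :
    ∃ s1 ∈ S1, ∃ s2 ∈ S2,
      (∀ t ∈ S1, u1 t s2 ≤ u1 s1 s2) ∧ (∀ t ∈ S2, u2 s1 t ≤ u2 s1 s2) := by
  classical
  -- largest best responses
  have key : ∀ (S : Finset ℝ), S.Nonempty → ∀ (f : ℝ → ℝ → ℝ) (t : ℝ),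
      ∃ s ∈ S, (∀ x ∈ S, f x t ≤ f s t) ∧
        ∀ s' ∈ S, (∀ x ∈ S, f x t ≤ f s' t) → s' ≤ s := by
    intro S hS f t
    set A := S.filter (fun s => ∀ x ∈ S, f x t ≤ f s t) with hA
    have hAne : A.Nonempty := by
      obtain ⟨s, hs, hmax⟩ := S.exists_max_image (fun x => f x t) hS
      exact ⟨s, Finset.mem_filter.2 ⟨hs, hmax⟩⟩
    refine ⟨A.max' hAne, ?_, ?_, ?_⟩
    · exact (Finset.mem_filter.1 (A.max'_mem hAne)).1
    · exact (Finset.mem_filter.1 (A.max'_mem hAne)).2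
    · intro s' hs' hopt
      exact Finset.le_max' A s' (Finset.mem_filter.2 ⟨hs', hopt⟩)
  choose B1 hB1mem hB1opt hB1max using key S1 h1 u1
  choose B2 hB2mem hB2opt hB2max using key S2 h2 (fun t s => u2 s t)
  -- monotonicity of best responses
  have mono1 : ∀ t t', t ≤ t' → B1 t ≤ B1 t' := by
    intro t t' htt
    by_contra h
    push_neg at h
    have hid := hid1 (B1 t') (B1 t) t t' h.le htt
    have h0 : u1 (B1 t') t ≤ u1 (B1 t) t := hB1opt t _ (hB1mem t')
    have hopt' : ∀ x ∈ S1, u1 x t' ≤ u1 (B1 t) t' := by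
      intro x hx
      have := hB1opt t' x hx
      linarith
    have := hB1max t' (B1 t) (hB1mem t) hopt'
    linarith
  have mono2 : ∀ s s', s ≤ s' → B2 s ≤ B2 s' := by
    intro s s' hss
    by_contra h
    push_neg at h
    have hid := hid2 s s' (B2 s') (B2 s) h.le hss
    have h0 : u2 s (B2 s') ≤ u2 s (B2 s) := hB2opt s _ (hB2mem s')
    have hopt' : ∀ x ∈ S2, u2 s' x ≤ u2 s' (B2 s) := by
      intro x hx
      have := hB2opt s' x hx
      linarith
    have := hB2max s' (B2 s) (hB2mem s) hopt'
    linarith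
  -- the set of "pre-fixed points"
  set P := (S1 ×ˢ S2).filter (fun p => B1 p.2 ≤ p.1 ∧ B2 p.1 ≤ p.2) with hP
  have hPne : P.Nonempty := by
    refine ⟨(S1.max' h1, S2.max' h2), Finset.mem_filter.2
      ⟨Finset.mem_product.2 ⟨S1.max'_mem h1, S2.max'_mem h2⟩, ?_, ?_⟩⟩
    · exact S1.le_max' _ (hB1mem _)
    · exact S2.le_max' _ (hB2mem _)
  obtain ⟨p, hp, hmin⟩ := P.exists_min_image (fun p => p.1 + p.2) hPne
  obtain ⟨hpmem, hle1, hle2⟩ := Finset.mem_filter.1 hp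
  -- the image of p under the best-response map is also in P
  have hq : (B1 p.2, B2 p.1) ∈ P := by
    refine Finset.mem_filter.2 ⟨Finset.mem_product.2 ⟨hB1mem _, hB2mem _⟩, ?_, ?_⟩
    · exact mono1 _ _ hle2
    · exact mono2 _ _ hle1
  have hmin' := hmin _ hq
  simp only at hmin'
  have he1 : B1 p.2 = p.1 := by linarith
  have he2 : B2 p.1 = p.2 := by linarith
  refine ⟨p.1, (Finset.mem_product.1 hpmem).1, p.2, (Finset.mem_product.1 hpmem).2, ?_, ?_⟩
  · intro t ht
    have := hB1opt p.2 t ht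
    rwa [he1] at this
  · intro t ht
    have := hB2opt p.1 t ht
    rwa [he2] at this
end

section
/- Let p* be an equilibrium profile and p'_Δ another equilibrium with p'_{Δ,k} ≤ p*_k for all k, p'_Δ ≠ p*. Assume each utility is u_k(p) = f(γ_k(p))/p_k with f nondecreasing and γ_k(p) = V α_k p_k/(σ² + Σ_{ℓ≠k} α_ℓ p_ℓ). Then u_k(p'_Δ) ≥ u_k(p*) for all k; in particular Σ_k u_k(p'_Δ) ≥ Σ_k u_k(p*). -/
open Finset

/-- SINR of player `k` (eq. (6)-(7)). -/
noncomputable def sinr10 (K : ℕ) (V σ2 : ℝ) (α p : Fin K → ℝ) (k : Fin K) : ℝ :=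
  V * α k * p k / (σ2 + ∑ ℓ ∈ univ.erase k, α ℓ * p ℓ)

/-- Energy-efficiency utility `u_k(p) = f(γ_k(p))/p_k`. -/
noncomputable def util10 (K : ℕ) (V σ2 : ℝ) (α : Fin K → ℝ) (f : ℝ → ℝ)
    (p : Fin K → ℝ) (k : Fin K) : ℝ :=
  f (sinr10 K V σ2 α p k) / p k

/-- Theorem 3: if `p'_Δ` and `p*` are both equilibria with
`p'_Δ ≤ p*` componentwise and `p'_Δ ≠ p*`, then every player is at least as
well off at `p'_Δ`, and so is the social welfare. -/
theorem stmt10 (K : ℕ) (V σ2 : ℝ) (hV : 0 < V) (hσ : 0 < σ2)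
    (α : Fin K → ℝ) (hα : ∀ k, 0 < α k)
    (f : ℝ → ℝ) (hf : Monotone f) (hf0 : ∀ x, 0 ≤ f x)
    (A : Fin K → Finset ℝ)
    (pstar pΔ : Fin K → ℝ)
    (hpos : ∀ k, 0 < pstar k) (hpos' : ∀ k, 0 < pΔ k)
    (hmem : ∀ k, pstar k ∈ A k) (hmem' : ∀ k, pΔ k ∈ A k)
    (heq : ∀ k, ∀ q ∈ A k,
      util10 K V σ2 α f (Function.update pstar k q) k ≤ util10 K V σ2 α f pstar k)
    (heq' : ∀ k, ∀ q ∈ A k,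
      util10 K V σ2 α f (Function.update pΔ k q) k ≤ util10 K V σ2 α f pΔ k)
    (hle : ∀ k, pΔ k ≤ pstar k) (hne : pΔ ≠ pstar) :
    (∀ k, util10 K V σ2 α f pstar k ≤ util10 K V σ2 α f pΔ k) ∧
      ∑ k, util10 K V σ2 α f pstar k ≤ ∑ k, util10 K V σ2 α f pΔ k := by
  have key : ∀ k, util10 K V σ2 α f pstar k ≤ util10 K V σ2 α f pΔ k := by
    intro k
    have h1 := heq' k (pstar k) (hmem k)
    refine le_trans ?_ h1
    unfold util10
    have hden : (0:ℝ) < σ2 + ∑ ℓ ∈ univ.erase k, α ℓ * pΔ ℓ := by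
      have : (0:ℝ) ≤ ∑ ℓ ∈ univ.erase k, α ℓ * pΔ ℓ :=
        Finset.sum_nonneg fun ℓ _ => le_of_lt (mul_pos (hα ℓ) (hpos' ℓ))
      linarith
    have hden' : (0:ℝ) < σ2 + ∑ ℓ ∈ univ.erase k, α ℓ * pstar ℓ := by
      have : (0:ℝ) ≤ ∑ ℓ ∈ univ.erase k, α ℓ * pstar ℓ :=
        Finset.sum_nonneg fun ℓ _ => le_of_lt (mul_pos (hα ℓ) (hpos ℓ))
      linarith
    have hsinr : sinr10 K V σ2 α pstar k ≤
        sinr10 K V σ2 α (Function.update pΔ k (pstar k)) k := by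
      unfold sinr10
      have hup : Function.update pΔ k (pstar k) k = pstar k := by simp
      rw [hup]
      have hdeneq : ∑ ℓ ∈ univ.erase k, α ℓ * Function.update pΔ k (pstar k) ℓ
          = ∑ ℓ ∈ univ.erase k, α ℓ * pΔ ℓ := by
        refine Finset.sum_congr rfl fun ℓ hℓ => ?_
        rw [Function.update_of_ne (Finset.ne_of_mem_erase hℓ)]
      rw [hdeneq]
      apply div_le_div_of_nonneg_left
      · exact le_of_lt (mul_pos (mul_pos hV (hα k)) (hpos k))
      · exact hden
      · refine add_le_add_right (Finset.sum_le_sum fun ℓ _ => ?_) σ2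
        exact mul_le_mul_of_nonneg_left (hle ℓ) (le_of_lt (hα ℓ))
    simp only [Function.update_self]
    exact div_le_div_of_nonneg_right (hf hsinr) (hpos k).le
  exact ⟨key, Finset.sum_le_sum fun k _ => key k⟩
end

section
/- Ascending best responses preserve order along profiles of others: if r_k is the argmax of p ↦ f(ν_k(q) p)/p over a finite set A, with f increasing on [0, γ*] (as a function of SINR) and the utility strictly increasing in p for p < γ*/ν_k(q), then for any two interference profiles q ≤ q' (componentwise, q ≠ q') with r_k(q) < γ*/ν_k(q), we have r_k(q') ≥ r_k(q). -/
open Finset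

/-- Interference coefficient for statement 17. -/
noncomputable def nu17 {ι : Type*} [Fintype ι] (V σ2 αk : ℝ) (α q : ι → ℝ) : ℝ :=
  V * αk / (σ2 + ∑ ℓ, α ℓ * q ℓ)

/-- Case 1 of the ascending-property proof: if the utility
`p ↦ f(ν_k(q)·p)/p` is strictly increasing below `γ*/ν_k(q)` and strictly
decreasing above, and the best response to `q` satisfies
`r(q) < γ*/ν_k(q)`, then for any larger interference profile `q' ≥ q`,
`q' ≠ q`, the best response does not decrease: `r(q) ≤ r(q')`. -/
theorem stmt17 {ι : Type*} [Fintype ι] (V σ2 αk γstar : ℝ)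
    (hV : 0 < V) (hσ : 0 < σ2) (hαk : 0 < αk) (hγ : 0 < γstar)
    (α : ι → ℝ) (hα : ∀ ℓ, 0 < α ℓ)
    (A : Finset ℝ) (hA : ∀ p ∈ A, 0 < p)
    (f : ℝ → ℝ)
    (hmono : ∀ w : ι → ℝ, (∀ ℓ, 0 ≤ w ℓ) → ∀ x y : ℝ, 0 < x → x < y →
      y < γstar / nu17 V σ2 αk α w →
      f (nu17 V σ2 αk α w * x) / x < f (nu17 V σ2 αk α w * y) / y)
    (hanti : ∀ w : ι → ℝ, (∀ ℓ, 0 ≤ w ℓ) → ∀ x y : ℝ,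
      γstar / nu17 V σ2 αk α w < x → x < y →
      f (nu17 V σ2 αk α w * y) / y < f (nu17 V σ2 αk α w * x) / x)
    (q q' : ι → ℝ) (hq : ∀ ℓ, 0 ≤ q ℓ) (hq' : ∀ ℓ, 0 ≤ q' ℓ)
    (hle : ∀ ℓ, q ℓ ≤ q' ℓ) (hne : q ≠ q')
    (rq rq' : ℝ)
    (hrq : rq ∈ A ∧ ∀ p ∈ A, f (nu17 V σ2 αk α q * p) / p
      ≤ f (nu17 V σ2 αk α q * rq) / rq)
    (hrq' : rq' ∈ A ∧ ∀ p ∈ A, f (nu17 V σ2 αk α q' * p) / p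
      ≤ f (nu17 V σ2 αk α q' * rq') / rq')
    (hcase1 : rq < γstar / nu17 V σ2 αk α q) :
    rq ≤ rq' := by
  by_contra h
  push_neg at h
  have hD : (0:ℝ) < σ2 + ∑ ℓ, α ℓ * q ℓ := by
    have : (0:ℝ) ≤ ∑ ℓ, α ℓ * q ℓ :=
      Finset.sum_nonneg fun ℓ _ => mul_nonneg (hα ℓ).le (hq ℓ)
    linarith
  have hD' : (0:ℝ) < σ2 + ∑ ℓ, α ℓ * q' ℓ := by
    have : (0:ℝ) ≤ ∑ ℓ, α ℓ * q' ℓ :=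
      Finset.sum_nonneg fun ℓ _ => mul_nonneg (hα ℓ).le (hq' ℓ)
    linarith
  have hDD : σ2 + ∑ ℓ, α ℓ * q ℓ ≤ σ2 + ∑ ℓ, α ℓ * q' ℓ := by
    have : ∑ ℓ, α ℓ * q ℓ ≤ ∑ ℓ, α ℓ * q' ℓ :=
      Finset.sum_le_sum fun ℓ _ => mul_le_mul_of_nonneg_left (hle ℓ) (hα ℓ).le
    linarith
  have hν' : 0 < nu17 V σ2 αk α q' := div_pos (mul_pos hV hαk) hD'
  have hνle : nu17 V σ2 αk α q' ≤ nu17 V σ2 αk α q :=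
    div_le_div_of_nonneg_left (mul_pos hV hαk).le hD hDD
  have hγle : γstar / nu17 V σ2 αk α q ≤ γstar / nu17 V σ2 αk α q' :=
    div_le_div_of_nonneg_left hγ.le hν' hνle
  have hlt := hmono q' hq' rq' rq (hA rq' hrq'.1) h (lt_of_lt_of_le hcase1 hγle)
  exact absurd (hrq'.2 rq hrq.1) (not_le.mpr hlt)
end
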